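/- Let N ≥ 1 and consider words W = W_{N−1}⋯W₁W₀ over the alphabet {B, I, G} satisfying: (i) W₀ = W_{N−1} = G; (ii) every occurrence of BB is immediately preceded and followed by G (as a subword GBBG); (iii) every occurrence of BI appears only as a subword of GBI; (iv) every occurrence of IB appears only as a subword of IBG. Then W decomposes as G^{k_M} V_M G^{k_{M−1}} V_{M−1} ⋯ G^{k_1} V_1 G^{k_0} with M ≥ 0, all k_i ≥ 1, and each V_i in the set {B, BB} ∪ {BI^kB, I^kB, I^k, BI^k : k ≥ 1}. -/

import Mathlib

/-!
Read the word from the left. After a maximal run of `G`s the next block is forced: a `B`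
followed by `G` is the block `B`; `BB` must be followed by `G`; otherwise an optional `B` is
followed by a maximal run of `I`s, which cannot end the word, so it is followed either by `G` or
by `B`, and then `IB` must be followed by `G`. What remains starts with `G` again. The conditions
that `BB` and `IB` be followed by `G` and that the word end in `G` pass to suffixes, so induction
on the length finishes the argument.
-/

/-- The alphabet {B, I, G}. -/
inductive Letter : Type
  | B | I | G
deriving DecidableEq

/-- The admissible excursion words: `B`, `BB`, `BI^kB`, `I^kB`, `I^k`, `BI^k` (k ≥ 1).
Words are written left-to-right; e.g. `I^k B` is `replicate k I ++ [B]`. -/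
def goodWord (V : List Letter) : Prop :=
  V = [Letter.B] ∨ V = [Letter.B, Letter.B] ∨
  ∃ k : ℕ, 1 ≤ k ∧
    (V = Letter.B :: (List.replicate k Letter.I ++ [Letter.B]) ∨
     V = List.replicate k Letter.I ++ [Letter.B] ∨
     V = List.replicate k Letter.I ∨
     V = Letter.B :: List.replicate k Letter.I)

namespace List

variable {α : Type*}

/-- Every occurrence of `u` in `l`, i.e. every suffix `u ++ y`, is immediately followed by `c`. -/
def FollowedBy (u : List α) (c : α) (l : List α) : Prop :=
  ∀ y, u ++ y <:+ l → y.head? = some c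

theorem FollowedBy.of_suffix {u s l : List α} {c : α} (h : FollowedBy u c l) (hs : s <:+ l) :
    FollowedBy u c s :=
  fun y hy => h y (hy.trans hs)

theorem followedBy_pair_of_getElem? {a b c : α} {l : List α}
    (h : ∀ i : ℕ, l[i]? = some a → l[i+1]? = some b → l[i+2]? = some c) :
    FollowedBy [a, b] c l := by
  rintro y ⟨x, rfl⟩
  have := h x.length (by simp) (by simp)
  simpa [getElem?_append_right, head?_eq_getElem?] using this

theorem exists_eq_replicate_append_head?_ne (a : α) (l : List α) :
    ∃ n w, l = replicate n a ++ w ∧ w.head? ≠ some a := by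
  induction l with
  | nil => exact ⟨0, [], rfl, by simp⟩
  | cons b l ih =>
    by_cases hb : b = a
    · obtain ⟨n, w, rfl, hw⟩ := ih
      exact ⟨n + 1, w, by simp [hb, replicate_succ], hw⟩
    · exact ⟨0, b :: l, rfl, by simpa using hb⟩

theorem IsSuffix.getLast?_eq {s l : List α} (h : s <:+ l) (hs : s ≠ []) :
    l.getLast? = s.getLast? := by
  obtain ⟨t, rfl⟩ := h
  exact getLast?_append_of_ne_nil t hs

end List

inductive ExcursionDecomposable : List Letter → Prop
  | replicate {k : ℕ} (hk : 1 ≤ k) : ExcursionDecomposable (List.replicate k Letter.G)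
  | append {k : ℕ} {V s : List Letter} (hk : 1 ≤ k) (hV : goodWord V)
      (hs : ExcursionDecomposable s) : ExcursionDecomposable (List.replicate k Letter.G ++ V ++ s)

section

open List Letter

theorem exists_replicate_I_excursion {t : List Letter} (hlast : (I :: t).getLast? = some G)
    (hIB : FollowedBy [I, B] G (I :: t)) :
    ∃ k, 1 ≤ k ∧ ∃ s, s.head? = some G ∧
      (I :: t = replicate k I ++ s ∨ I :: t = replicate k I ++ B :: s) := by
  obtain ⟨n, w, rfl, hw⟩ := exists_eq_replicate_append_head?_ne I t
  rw [← cons_append, ← replicate_succ] at hlast hIB ⊢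
  match w, hw with
  | [], _ => simp [getLast?_replicate] at hlast
  | I :: _, hw => simp at hw
  | G :: v, _ => exact ⟨n + 1, by omega, G :: v, rfl, Or.inl rfl⟩
  | B :: v, _ =>
    exact ⟨n + 1, by omega, v, hIB v ⟨replicate n I, by simp [replicate_succ']⟩, Or.inr rfl⟩

theorem exists_goodWord_append {r : List Letter} (hr : r.head? ≠ some G)
    (hlast : r.getLast? = some G) (hBB : FollowedBy [B, B] G r) (hIB : FollowedBy [I, B] G r) :
    ∃ V s, goodWord V ∧ r = V ++ s ∧ s.head? = some G := by
  match r with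
  | [] => simp at hlast
  | G :: _ => simp at hr
  | I :: t =>
    obtain ⟨k, hk, s, hs, h | h⟩ := exists_replicate_I_excursion hlast hIB
    · exact ⟨replicate k I, s, .inr <| .inr ⟨k, hk, .inr <| .inr <| .inl rfl⟩, h, hs⟩
    · exact ⟨replicate k I ++ [B], s, .inr <| .inr ⟨k, hk, .inr <| .inl rfl⟩, by simp [h], hs⟩
  | [B] => simp at hlast
  | B :: G :: u => exact ⟨[B], G :: u, .inl rfl, rfl, rfl⟩
  | B :: B :: u => exact ⟨[B, B], u, .inr <| .inl rfl, rfl, hBB u (suffix_refl _)⟩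
  | B :: I :: t =>
    obtain ⟨k, hk, s, hs, h | h⟩ := exists_replicate_I_excursion
      (by rwa [getLast?_cons_cons] at hlast) (hIB.of_suffix (suffix_cons _ _))
    · exact ⟨B :: replicate k I, s, .inr <| .inr ⟨k, hk, .inr <| .inr <| .inr rfl⟩, by simp [h],
        hs⟩
    · exact ⟨B :: (replicate k I ++ [B]), s, .inr <| .inr ⟨k, hk, .inl rfl⟩, by simp [h], hs⟩

theorem excursionDecomposable_of_followedBy {l : List Letter} (hhead : l.head? = some G)
    (hlast : l.getLast? = some G) (hBB : FollowedBy [B, B] G l) (hIB : FollowedBy [I, B] G l) :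
    ExcursionDecomposable l := by
  obtain ⟨n, r, rfl, hr⟩ := exists_eq_replicate_append_head?_ne G l
  have hn : 1 ≤ n := by
    rcases n with _ | n
    · exact absurd hhead hr
    · omega
  rcases eq_or_ne r [] with rfl | hne
  · simpa using ExcursionDecomposable.replicate hn
  have hr_suffix : r <:+ replicate n G ++ r := suffix_append _ _
  obtain ⟨V, s, hV, rfl, hs⟩ := exists_goodWord_append hr
    ((hr_suffix.getLast?_eq hne).symm.trans hlast) (hBB.of_suffix hr_suffix)
    (hIB.of_suffix hr_suffix)
  have hs_suffix : s <:+ replicate n G ++ (V ++ s) := ⟨replicate n G ++ V, by simp⟩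
  rw [← append_assoc]
  exact .append hn hV <| excursionDecomposable_of_followedBy hs
    ((hs_suffix.getLast?_eq (by rintro rfl; simp at hs)).symm.trans hlast)
    (hBB.of_suffix hs_suffix) (hIB.of_suffix hs_suffix)
termination_by l.length
decreasing_by subst_vars; simp; omega

end

theorem ExcursionDecomposable.exists_flatten {l : List Letter} (h : ExcursionDecomposable l) :
    ∃ (M : ℕ) (k : ℕ → ℕ) (V : ℕ → List Letter),
      (∀ i : ℕ, i ≤ M → 1 ≤ k i) ∧
      (∀ i : ℕ, 1 ≤ i → i ≤ M → goodWord (V i)) ∧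
      l = ((List.range M).map
            (fun j => List.replicate (k (M - j)) Letter.G ++ V (M - j))).flatten ++
          List.replicate (k 0) Letter.G := by
  induction h with
  | replicate hk => exact ⟨0, fun _ => _, fun _ => [], fun _ _ => hk, by omega, by simp⟩
  | @append a W s ha hW _ ih =>
    obtain ⟨M, k, V, hk, hV, rfl⟩ := ih
    refine ⟨M + 1, Function.update k (M + 1) a, Function.update V (M + 1) W, ?_, ?_, ?_⟩
    · intro i hi
      rcases eq_or_ne i (M + 1) with rfl | hne
      · simpa using ha
      · simpa [hne] using hk i (by omega)
    · intro i hi₁ hi₂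
      rcases eq_or_ne i (M + 1) with rfl | hne
      · simpa using hW
      · simpa [hne] using hV i hi₁ (by omega)
    · have hshift : ∀ j ∈ List.range M,
          List.replicate (Function.update k (M + 1) a (M + 1 - (j + 1))) Letter.G ++
            Function.update V (M + 1) W (M + 1 - (j + 1)) =
          List.replicate (k (M - j)) Letter.G ++ V (M - j) := by
        intro j hj
        have : M - j ≠ M + 1 := by omega
        simp [Nat.add_sub_add_right, this]
      simp only [List.range_succ_eq_map, List.map_cons, List.map_map, Function.comp_def,
        Nat.succ_eq_add_one]
      rw [List.map_congr_left hshift]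
      simp

theorem stmt_12_general (l : List Letter)
    (hfirst : l.head? = some Letter.G) (hlast : l.getLast? = some Letter.G)
    (hBB : ∀ i : ℕ, l[i]? = some Letter.B → l[i+1]? = some Letter.B →
      (∃ j : ℕ, i = j + 1 ∧ l[j]? = some Letter.G) ∧ l[i+2]? = some Letter.G)
    (hIB : ∀ i : ℕ, l[i]? = some Letter.I → l[i+1]? = some Letter.B →
      l[i+2]? = some Letter.G) :
    ∃ (M : ℕ) (k : ℕ → ℕ) (V : ℕ → List Letter),
      (∀ i : ℕ, i ≤ M → 1 ≤ k i) ∧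
      (∀ i : ℕ, 1 ≤ i → i ≤ M → goodWord (V i)) ∧
      l = ((List.range M).map
            (fun j => List.replicate (k (M - j)) Letter.G ++ V (M - j))).flatten ++
          List.replicate (k 0) Letter.G :=
  (excursionDecomposable_of_followedBy hfirst hlast
    (List.followedBy_pair_of_getElem? fun i h₁ h₂ => (hBB i h₁ h₂).2)
    (List.followedBy_pair_of_getElem? hIB)).exists_flatten

/-- Combinatorial decomposition: a word over {B,I,G} beginning and ending with `G`,
in which `BB` occurs only inside `GBBG`, `BI` only inside `GBI`, and `IB` only
inside `IBG`, decomposes as `G^{k_M} V_M G^{k_{M-1}} V_{M-1} ⋯ G^{k_1} V_1 G^{k_0}`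
with all `k_i ≥ 1` and each `V_i` an admissible excursion word. -/
theorem stmt_12 (N : ℕ) (hN : 1 ≤ N) (l : List Letter) (hlen : l.length = N)
    (hfirst : l.head? = some Letter.G) (hlast : l.getLast? = some Letter.G)
    (hBB : ∀ i : ℕ, l[i]? = some Letter.B → l[i+1]? = some Letter.B →
      (∃ j : ℕ, i = j + 1 ∧ l[j]? = some Letter.G) ∧ l[i+2]? = some Letter.G)
    (hBI : ∀ i : ℕ, l[i]? = some Letter.B → l[i+1]? = some Letter.I →
      ∃ j : ℕ, i = j + 1 ∧ l[j]? = some Letter.G)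
    (hIB : ∀ i : ℕ, l[i]? = some Letter.I → l[i+1]? = some Letter.B →
      l[i+2]? = some Letter.G) :
    ∃ (M : ℕ) (k : ℕ → ℕ) (V : ℕ → List Letter),
      (∀ i : ℕ, i ≤ M → 1 ≤ k i) ∧
      (∀ i : ℕ, 1 ≤ i → i ≤ M → goodWord (V i)) ∧
      l = ((List.range M).map
            (fun j => List.replicate (k (M - j)) Letter.G ++ V (M - j))).flatten ++
          List.replicate (k 0) Letter.G :=
  stmt_12_general l hfirst hlast hBB hIB
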